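/- arXiv:1305.4743 — 4 statements merged into one kernel-verified Lean document; each statement's English description precedes it below -/
import Mathlib

section
/- For any positive integer k and any integer m with 1 ≤ m ≤ k, the improper integral over the real line of sin(u)^{2k} / u^{2m} du equals (π · (-1/4)^{k-m} / (2m-1)!) · Σ_{i=0}^{k-1} (-1)^i · C(2k, i) · (k-i)^{2m-1}. -/
/-!
Write `1 / |u| ^ (2m) = (2m-1)!⁻¹ ∫_{t>0} t^(2m-1) e^(-t|u|) dt` and swap the integrals. The inner
integral is then the Laplace transform of `sin^(2k)`; integrating by parts twice gives the recursion
`(t² + (n+2)²) L_{n+2} = (n+2)(n+1) L_n`, hence `t L_{2k}(t) = (2k)! / ∏_{j=1}^k (t² + (2j)²)`.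
Since `2m - 2 < 2k`, Lagrange interpolation at the nodes `-(2j)²` splits
`t^(2m-2) / ∏_j (t² + (2j)²)` into partial fractions, each of which integrates to `π / (4j)`.
The Lagrange weights are explicit products of factorials, and they turn into the binomial
coefficients of the right-hand side.
-/

open Real MeasureTheory Finset Filter Topology

open scoped Nat

lemma integral_Ioi_pow_mul_exp_neg_mul (n : ℕ) {c : ℝ} (hc : 0 < c) :
    ∫ t in Set.Ioi 0, t ^ n * exp (-(c * t)) = n ! / c ^ (n + 1) := by
  have h := integral_rpow_mul_exp_neg_mul_Ioi (a := n + 1) (by positivity) hc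
  simp only [add_sub_cancel_right, rpow_natCast] at h
  rw [h, Gamma_nat_eq_factorial, ← Nat.cast_add_one, rpow_natCast, one_div, inv_pow]
  ring

lemma integrableOn_Ioi_pow_mul_exp_neg_mul (n : ℕ) {c : ℝ} (hc : 0 < c) :
    IntegrableOn (fun t => t ^ n * exp (-(c * t))) (Set.Ioi 0) :=
  Integrable.of_integral_ne_zero <| by
    rw [integral_Ioi_pow_mul_exp_neg_mul n hc]; positivity

lemma integral_div_abs_pow_eq_integral_Ioi_laplace {f : ℝ → ℝ} (n : ℕ)
    (hf : Integrable fun u => f u / |u| ^ (n + 1)) :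
    ∫ u, f u / |u| ^ (n + 1) =
      (n ! : ℝ)⁻¹ * ∫ t in Set.Ioi 0, t ^ n * ∫ u, f u * exp (-(t * |u|)) := by
  set G : ℝ → ℝ → ℝ := fun u t => f u * (t ^ n * exp (-(|u| * t)))
  have hker {u : ℝ} (hu : u ≠ 0) : ∫ t in Set.Ioi 0, G u t = n ! * (f u / |u| ^ (n + 1)) := by
    rw [integral_const_mul, integral_Ioi_pow_mul_exp_neg_mul n (abs_pos.2 hu)]
    ring
  have hf_meas : AEStronglyMeasurable f := by
    refine (hf.aestronglyMeasurable.mul (continuous_abs.pow (n + 1)).aestronglyMeasurable).congr ?_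
    filter_upwards [Measure.ae_ne volume 0] with u hu
    simp [field, hu]
  have hG : Integrable (Function.uncurry G) (volume.prod (volume.restrict (Set.Ioi 0))) := by
    have hmeas : AEStronglyMeasurable (Function.uncurry G)
        (volume.prod (volume.restrict (Set.Ioi 0))) :=
      hf_meas.comp_fst.mul (by fun_prop : Continuous fun p : ℝ × ℝ =>
        p.2 ^ n * exp (-(|p.1| * p.2))).aestronglyMeasurable
    refine (integrable_prod_iff hmeas).2 ⟨?_, ?_⟩
    · filter_upwards [Measure.ae_ne volume 0] with u hu
      exact (integrableOn_Ioi_pow_mul_exp_neg_mul n (abs_pos.2 hu)).const_mul (f u)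
    · refine (hf.norm.const_mul (n ! : ℝ)).congr ?_
      filter_upwards [Measure.ae_ne volume 0] with u hu
      have hnorm (t : ℝ) (ht : t ∈ Set.Ioi 0) :
          ‖Function.uncurry G (u, t)‖ = ‖f u‖ * (t ^ n * exp (-(|u| * t))) := by
        have : 0 ≤ t ^ n * exp (-(|u| * t)) := by have : (0 : ℝ) < t := ht; positivity
        rw [Function.uncurry_apply_pair, norm_mul, norm_of_nonneg this]
      rw [setIntegral_congr_fun measurableSet_Ioi hnorm, integral_const_mul,
        integral_Ioi_pow_mul_exp_neg_mul n (abs_pos.2 hu), norm_div, norm_pow, norm_eq_abs |u|,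
        abs_abs]
      ring
  calc ∫ u, f u / |u| ^ (n + 1) = (n ! : ℝ)⁻¹ * ∫ u, ∫ t in Set.Ioi 0, G u t := by
        rw [← integral_const_mul]
        refine integral_congr_ae ?_
        filter_upwards [Measure.ae_ne volume 0] with u hu
        rw [hker hu, inv_mul_cancel_left₀ (by positivity)]
    _ = (n ! : ℝ)⁻¹ * ∫ t in Set.Ioi 0, ∫ u, G u t := by rw [integral_integral_swap hG]
    _ = _ := by
      congr 1
      refine setIntegral_congr_fun measurableSet_Ioi fun t _ => ?_
      rw [← integral_const_mul]
      congr 1 with u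
      simp only [G, mul_comm |u| t]
      ring

lemma integrable_sin_pow_div_pow {n p : ℕ} (hp : 2 ≤ p) (hpn : p ≤ n) :
    Integrable (fun u : ℝ => sin u ^ n / u ^ p) := by
  refine (integrable_inv_one_add_sq.const_mul 2).mono'
    (by fun_prop : Measurable _).aestronglyMeasurable (.of_forall fun u => ?_)
  have h1 : 0 < 1 + u ^ 2 := by positivity
  rw [norm_div, norm_pow, norm_pow, norm_eq_abs, norm_eq_abs]
  rcases le_or_gt |u| 1 with hu | hu
  · have : |sin u| ^ n ≤ |u| ^ p := (pow_le_pow_left₀ (abs_nonneg _) abs_sin_le_abs n).trans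
      (pow_le_pow_of_le_one (abs_nonneg _) hu hpn)
    calc _ ≤ (1 : ℝ) := div_le_one_of_le₀ this (by positivity)
      _ ≤ 2 * (1 + u ^ 2)⁻¹ := by
        rw [le_mul_inv_iff₀ h1]; nlinarith [sq_abs u, abs_nonneg u]
  · calc _ ≤ 1 / |u| ^ 2 :=
          div_le_div₀ zero_le_one (pow_le_one₀ (abs_nonneg _) (abs_sin_le_one u))
            (by positivity) (pow_le_pow_right₀ hu.le hp)
      _ ≤ 2 * (1 + u ^ 2)⁻¹ := by
        have h2 : 1 < u ^ 2 := by nlinarith [sq_abs u]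
        rw [sq_abs, div_le_iff₀ (by linarith), mul_right_comm, le_mul_inv_iff₀ h1]
        linarith

lemma integrableOn_Ioi_mul_exp_neg_mul {g : ℝ → ℝ} {t C : ℝ} (ht : 0 < t)
    (hg : Measurable g) (hC : ∀ x, |g x| ≤ C) :
    IntegrableOn (fun u => g u * exp (-(t * u))) (Set.Ioi 0) := by
  have h := (exp_neg_integrableOn_Ioi 0 ht).bdd_mul hg.aestronglyMeasurable (.of_forall hC)
  simp only [neg_mul] at h
  exact h

lemma integral_Ioi_deriv_mul_exp_neg_mul {h h' : ℝ → ℝ} {t C C' : ℝ} (ht : 0 < t)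
    (hd : ∀ x, HasDerivAt h (h' x) x) (hC : ∀ x, |h x| ≤ C) (hC' : ∀ x, |h' x| ≤ C')
    (h0 : h 0 = 0) :
    ∫ u in Set.Ioi 0, h' u * exp (-(t * u)) = t * ∫ u in Set.Ioi 0, h u * exp (-(t * u)) := by
  have hint := integrableOn_Ioi_mul_exp_neg_mul ht
    (continuous_iff_continuousAt.2 fun x => (hd x).continuousAt).measurable hC
  have hint' := integrableOn_Ioi_mul_exp_neg_mul ht
    (by rw [show h' = deriv h from funext fun x => (hd x).deriv.symm]; exact measurable_deriv h) hC'
  have hexp (x : ℝ) : HasDerivAt (fun u => exp (-(t * u))) (-t * exp (-(t * x))) x := by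
    simpa [mul_comm] using ((hasDerivAt_id x).const_mul t).neg.exp
  have hlim : Tendsto (fun u => h u * exp (-(t * u))) atTop (𝓝 0) := by
    have hdecay : Tendsto (fun u => C * exp (-(t * u))) atTop (𝓝 0) := by
      simpa using (tendsto_exp_atBot.comp
        (tendsto_neg_atBot_iff.2 (tendsto_id.const_mul_atTop ht))).const_mul C
    refine squeeze_zero_norm (fun u => ?_) hdecay
    rw [norm_mul, norm_of_nonneg (exp_pos _).le]
    exact mul_le_mul_of_nonneg_right (hC u) (exp_pos _).le
  have key := integral_Ioi_of_hasDerivAt_of_tendsto'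
    (f' := fun u => h' u * exp (-(t * u)) + -t * (h u * exp (-(t * u))))
    (fun x _ => ((hd x).mul (hexp x)).congr_deriv (by ring)) (hint'.add (hint.const_mul (-t)))
    hlim
  rw [integral_add hint' (hint.const_mul _), integral_const_mul, Pi.mul_apply, h0, zero_mul,
    sub_zero] at key
  linarith

lemma abs_sin_pow_le_one (n : ℕ) (x : ℝ) : |sin x ^ n| ≤ 1 := by
  rw [abs_pow]
  exact pow_le_one₀ (abs_nonneg _) (abs_sin_le_one x)

/-- `(sin^(n+2))'' = (n+2)(n+1) sin^n - (n+2)² sin^(n+2)`, and `integral_Ioi_deriv_mul_exp_neg_mul`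
applied twice turns the left side into `t²` times the Laplace transform of `sin^(n+2)`. -/
lemma integral_Ioi_sin_pow_add_two_mul_exp_neg_mul (n : ℕ) {t : ℝ} (ht : 0 < t) :
    (t ^ 2 + (n + 2) ^ 2) * ∫ u in Set.Ioi 0, sin u ^ (n + 2) * exp (-(t * u)) =
      (n + 2) * (n + 1) * ∫ u in Set.Ioi 0, sin u ^ n * exp (-(t * u)) := by
  have hd (x : ℝ) :
      HasDerivAt (fun u => sin u ^ (n + 2)) ((n + 2) * (sin x ^ (n + 1) * cos x)) x := by
    refine ((hasDerivAt_sin x).fun_pow (n + 2)).congr_deriv ?_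
    rw [show n + 2 - 1 = n + 1 by omega]; push_cast; ring
  have hd' (x : ℝ) : HasDerivAt (fun u => (n + 2) * (sin u ^ (n + 1) * cos u))
      ((n + 2) * ((n + 1) * sin x ^ n - (n + 2) * sin x ^ (n + 2))) x := by
    refine ((((hasDerivAt_sin x).fun_pow (n + 1)).mul (hasDerivAt_cos x)).const_mul
      ((n : ℝ) + 2)).congr_deriv ?_
    rw [Nat.add_sub_cancel]
    push_cast
    linear_combination (n + 2) * (n + 1) * sin x ^ n * sin_sq_add_cos_sq x
  have hb (x : ℝ) : |(n + 2) * (sin x ^ (n + 1) * cos x)| ≤ n + 2 := by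
    rw [abs_mul, abs_mul, abs_of_pos (by positivity)]
    exact mul_le_of_le_one_right (by positivity)
      (mul_le_one₀ (abs_sin_pow_le_one _ x) (abs_nonneg _) (abs_cos_le_one x))
  have hb' (x : ℝ) : |(n + 2) * ((n + 1) * sin x ^ n - (n + 2) * sin x ^ (n + 2))| ≤
      ((n : ℝ) + 2) * ((n + 1) + (n + 2)) := by
    rw [abs_mul, abs_of_pos (by positivity)]
    refine mul_le_mul_of_nonneg_left ((abs_sub _ _).trans (add_le_add ?_ ?_)) (by positivity)
    all_goals
      rw [abs_mul, abs_of_pos (by positivity)]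
      exact mul_le_of_le_one_right (by positivity) (abs_sin_pow_le_one _ x)
  have hint (p : ℕ) := integrableOn_Ioi_mul_exp_neg_mul ht (by fun_prop) (abs_sin_pow_le_one p)
  have hsplit : ∫ u in Set.Ioi 0, (n + 2) * ((n + 1) * sin u ^ n - (n + 2) * sin u ^ (n + 2)) *
      exp (-(t * u)) = (n + 2) * (n + 1) * (∫ u in Set.Ioi 0, sin u ^ n * exp (-(t * u))) -
        (n + 2) ^ 2 * ∫ u in Set.Ioi 0, sin u ^ (n + 2) * exp (-(t * u)) := by
    rw [← integral_const_mul, ← integral_const_mul, ← integral_sub ((hint n).const_mul _)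
      ((hint (n + 2)).const_mul _)]
    congr 1 with u
    ring
  have e := integral_Ioi_deriv_mul_exp_neg_mul ht hd' hb hb' (by simp)
  rw [hsplit, integral_Ioi_deriv_mul_exp_neg_mul ht hd (abs_sin_pow_le_one _) hb (by simp)] at e
  linear_combination -e

lemma mul_integral_Ioi_sin_pow_mul_exp_neg_mul (k : ℕ) {t : ℝ} (ht : 0 < t) :
    t * ∫ u in Set.Ioi 0, sin u ^ (2 * k) * exp (-(t * u)) =
      (2 * k)! / ∏ j ∈ Icc 1 k, (t ^ 2 + (2 * (j : ℝ)) ^ 2) := by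
  induction k with
  | zero =>
    simpa [field, mul_comm t] using integral_Ioi_pow_mul_exp_neg_mul 0 ht
  | succ k ih =>
    set P := ∏ j ∈ Icc 1 k, (t ^ 2 + (2 * (j : ℝ)) ^ 2)
    have hP : 0 < P := prod_pos fun j _ => by positivity
    have hrec := integral_Ioi_sin_pow_add_two_mul_exp_neg_mul (2 * k) ht
    rw [eq_div_iff hP.ne'] at ih
    rw [prod_Icc_succ_top (by omega), eq_div_iff (by positivity),
      show 2 * (k + 1) = 2 * k + 2 by ring, Nat.factorial_succ, Nat.factorial_succ]
    push_cast at hrec ⊢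
    linear_combination (t * P) * hrec + (2 * k + 2) * (2 * k + 1) * ih

lemma mul_integral_sin_pow_mul_exp_neg_mul_abs (k : ℕ) {t : ℝ} (ht : 0 < t) :
    t * ∫ u, sin u ^ (2 * k) * exp (-(t * |u|)) =
      2 * ((2 * k)! / ∏ j ∈ Icc 1 k, (t ^ 2 + (2 * (j : ℝ)) ^ 2)) := by
  have heven (u : ℝ) : sin |u| ^ (2 * k) = sin u ^ (2 * k) := by
    rcases abs_choice u with h | h <;> simp [h, Even.neg_pow (even_two_mul k)]
  have h := integral_comp_abs (f := fun x => sin x ^ (2 * k) * exp (-(t * x)))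
  simp only [heven] at h
  rw [h, mul_left_comm, mul_integral_Ioi_sin_pow_mul_exp_neg_mul k ht]

lemma integral_Ioi_inv_sq_add_sq {a : ℝ} (ha : 0 < a) :
    ∫ t in Set.Ioi 0, (t ^ 2 + a ^ 2)⁻¹ = π / (2 * a) := by
  have hderiv (t : ℝ) : HasDerivAt (fun t => arctan (t / a) / a) (t ^ 2 + a ^ 2)⁻¹ t :=
    (((hasDerivAt_id t).div_const a).arctan.div_const a).congr_deriv
      (by simp only [id]; field_simp; ring)
  have hlim : Tendsto (fun t => arctan (t / a) / a) atTop (𝓝 (π / 2 / a)) :=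
    ((tendsto_arctan_atTop.mono_right nhdsWithin_le_nhds).comp
      (tendsto_id.atTop_div_const ha)).div_const a
  rw [integral_Ioi_of_hasDerivAt_of_nonneg' (fun t _ => hderiv t) (fun t _ => by positivity) hlim]
  simp only [zero_div, arctan_zero, sub_zero]
  ring

lemma integrableOn_Ioi_inv_sq_add_sq {a : ℝ} (ha : 0 < a) :
    IntegrableOn (fun t : ℝ => (t ^ 2 + a ^ 2)⁻¹) (Set.Ioi 0) :=
  Integrable.of_integral_ne_zero <| by
    rw [integral_Ioi_inv_sq_add_sq ha]; positivity

lemma pow_div_prod_sub_eq_sum_nodalWeight {F ι : Type*} [Field F] [DecidableEq ι]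
    {s : Finset ι} {v : ι → F} (hvs : Set.InjOn v s) {μ : ℕ} (hμ : μ < #s) {x : F}
    (hx : ∀ i ∈ s, x ≠ v i) :
    x ^ μ / ∏ i ∈ s, (x - v i) = ∑ i ∈ s, Lagrange.nodalWeight s v i * v i ^ μ / (x - v i) := by
  have h := congrArg (Polynomial.eval x) (Lagrange.eq_interpolate hvs
    (f := Polynomial.X ^ μ) (by rwa [Polynomial.degree_X_pow, Nat.cast_lt]))
  rw [Lagrange.eval_interpolate_not_at_node _ hx, Lagrange.eval_nodal] at h
  simp only [Polynomial.eval_pow, Polynomial.eval_X] at h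
  rw [h, mul_div_cancel_left₀ _ (prod_ne_zero_iff.2 fun i hi => sub_ne_zero.2 (hx i hi))]
  exact sum_congr rfl fun i _ => by ring

lemma integral_Ioi_pow_div_prod_sq_add_sq {ι : Type*} [DecidableEq ι] {s : Finset ι}
    {a : ι → ℝ} (ha : ∀ i ∈ s, 0 < a i) (hinj : Set.InjOn a s) {μ : ℕ} (hμ : μ < #s) :
    ∫ t in Set.Ioi 0, t ^ (2 * μ) / ∏ i ∈ s, (t ^ 2 + a i ^ 2) =
      ∑ i ∈ s, Lagrange.nodalWeight s (fun i => -a i ^ 2) i * (-a i ^ 2) ^ μ * (π / (2 * a i)) := by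
  have hv : Set.InjOn (fun i => -a i ^ 2) s := fun i hi j hj h =>
    hinj hi hj ((sq_eq_sq₀ (ha i hi).le (ha j hj).le).1 (neg_inj.1 h))
  have hpf (t : ℝ) : t ^ (2 * μ) / ∏ i ∈ s, (t ^ 2 + a i ^ 2) = ∑ i ∈ s,
      Lagrange.nodalWeight s (fun i => -a i ^ 2) i * (-a i ^ 2) ^ μ * (t ^ 2 + a i ^ 2)⁻¹ := by
    have := pow_div_prod_sub_eq_sum_nodalWeight hv hμ (x := t ^ 2) fun i hi => by
      nlinarith [ha i hi, sq_nonneg t]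
    simpa only [sub_neg_eq_add, ← pow_mul, div_eq_mul_inv] using this
  simp_rw [hpf]
  rw [integral_finsetSum _ fun i hi => (integrableOn_Ioi_inv_sq_add_sq (ha i hi)).const_mul _]
  exact sum_congr rfl fun i hi => by rw [integral_const_mul, integral_Ioi_inv_sq_add_sq (ha i hi)]

lemma prod_Ico_one_cast_sub (j : ℕ) :
    ∏ l ∈ Ico 1 j, ((l : ℝ) - j) = (-1) ^ (j - 1) * (j - 1)! := by
  cases j with
  | zero => simp
  | succ j =>
    calc ∏ l ∈ Ico 1 (j + 1), ((l : ℝ) - ↑(j + 1))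
        = ∏ l ∈ Ico 1 (j + 1), -((j + 1 - l : ℕ) : ℝ) :=
          prod_congr rfl fun l hl => by rw [Nat.cast_sub (mem_Ico.1 hl).2.le]; ring
      _ = ∏ l ∈ Ico 1 (j + 1), -(l : ℝ) := by
          rw [prod_Ico_reflect (fun l => -(l : ℝ)) 1 (n := j + 1) (by omega)]; simp
      _ = _ := by
          rw [prod_neg, Nat.card_Ico, ← Nat.cast_prod, prod_Ico_id_eq_factorial]; simp

lemma prod_Ioc_cast_sub {j k : ℕ} (hjk : j ≤ k) : ∏ l ∈ Ioc j k, ((l : ℝ) - j) = (k - j)! := by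
  rw [← Ico_add_one_add_one_eq_Ioc, prod_Ico_eq_prod_range, ← prod_range_add_one_eq_factorial,
    Nat.cast_prod]
  refine prod_congr (by congr 1; omega) fun i _ => ?_
  push_cast; ring

lemma factorial_mul_prod_Icc_cast_add (j k : ℕ) :
    j ! * ∏ l ∈ Icc 1 k, ((l : ℝ) + j) = (j + k)! := by
  rw [← Nat.factorial_mul_ascFactorial, Nat.ascFactorial_eq_prod_range,
    ← Ico_add_one_right_eq_Icc, prod_Ico_eq_prod_range]
  push_cast
  congr 1
  exact prod_congr (by simp) fun i _ => by ring

lemma prod_erase_Icc_cast_sq_sub_sq {j k : ℕ} (hj : 1 ≤ j) (hjk : j ≤ k) :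
    ∏ l ∈ (Icc 1 k).erase j, ((l : ℝ) ^ 2 - j ^ 2) =
      (-1) ^ (j - 1) * (k - j)! * (k + j)! / (2 * j ^ 2) := by
  have hsplit : (Icc 1 k).erase j = Ico 1 j ∪ Ioc j k := by
    ext l; simp only [mem_erase, mem_Icc, mem_union, mem_Ico, mem_Ioc]; omega
  have hdisj : Disjoint (Ico 1 j) (Ioc j k) :=
    disjoint_left.2 fun l h1 h2 => by simp only [mem_Ico, mem_Ioc] at h1 h2; omega
  have hsub : ∏ l ∈ (Icc 1 k).erase j, ((l : ℝ) - j) = (-1) ^ (j - 1) * (j - 1)! * (k - j)! := by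
    rw [hsplit, prod_union hdisj, prod_Ico_one_cast_sub, prod_Ioc_cast_sub hjk]
  have hadd : ∏ l ∈ (Icc 1 k).erase j, ((l : ℝ) + j) = (k + j)! / (j ! * (2 * j)) := by
    have h := factorial_mul_prod_Icc_cast_add j k
    rw [← mul_prod_erase _ _ (mem_Icc.2 ⟨hj, hjk⟩), add_comm j k] at h
    rw [eq_div_iff (by positivity), ← h]
    ring
  have hfac : (j ! : ℝ) = j * (j - 1)! := by
    rw [← Nat.mul_factorial_pred (by omega : j ≠ 0)]; push_cast; ring
  simp_rw [sq_sub_sq, prod_mul_distrib, hsub, hadd, hfac]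
  field_simp

lemma nodalWeight_Icc_neg_sq {j k : ℕ} (hj : 1 ≤ j) (hjk : j ≤ k) :
    Lagrange.nodalWeight (Icc 1 k) (fun l : ℕ => -(2 * (l : ℝ)) ^ 2) j =
      (-1 : ℝ) ^ (j - 1) * (2 * j ^ 2) / (4 ^ (k - 1) * (k - j)! * (k + j)!) := by
  have h (l : ℕ) : -(2 * (j : ℝ)) ^ 2 - -(2 * (l : ℝ)) ^ 2 = 4 * ((l : ℝ) ^ 2 - j ^ 2) := by ring
  rw [Lagrange.nodalWeight, prod_inv_distrib]
  simp_rw [h]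
  rw [prod_mul_distrib, prod_const, card_erase_of_mem (mem_Icc.2 ⟨hj, hjk⟩), Nat.card_Icc,
    prod_erase_Icc_cast_sq_sub_sq hj hjk, Nat.add_sub_cancel]
  have hsq : (-1 : ℝ) ^ ((j - 1) * 2) = 1 := by rw [pow_mul', neg_one_sq, one_pow]
  field_simp
  linear_combination -hsq

lemma two_mul_factorial_mul_nodalWeight_eq {j k μ : ℕ} (hj : 1 ≤ j) (hjk : j ≤ k)
    (hμk : μ < k) :
    2 * (2 * k)! * (Lagrange.nodalWeight (Icc 1 k) (fun l : ℕ => -(2 * (l : ℝ)) ^ 2) j *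
      (-(2 * (j : ℝ)) ^ 2) ^ μ * (π / (2 * (2 * j)))) =
      π * (-(1 / 4)) ^ (k - (μ + 1)) *
        ((-1) ^ (k - j) * (2 * k).choose (k - j) * (j : ℝ) ^ (2 * μ + 1)) := by
  -- the four exponents add up to `2 * (k - 1)`
  have hsign : (-1 : ℝ) ^ μ * (-1) ^ (j - 1) = (-1) ^ (k - (μ + 1)) * (-1) ^ (k - j) := by
    rw [← pow_add, ← pow_add, neg_one_pow_eq_pow_mod_two,
      neg_one_pow_eq_pow_mod_two (n := k - (μ + 1) + (k - j))]
    congr 1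
    omega
  have h4 : (4 : ℝ) ^ (k - 1) = 4 ^ μ * 4 ^ (k - (μ + 1)) := by rw [← pow_add]; congr 1; omega
  rw [nodalWeight_Icc_neg_sq hj hjk, Nat.cast_choose ℝ (by omega : k - j ≤ 2 * k),
    show 2 * k - (k - j) = k + j by omega, h4, neg_pow ((2 * (j : ℝ)) ^ 2), neg_pow (1 / 4 : ℝ),
    show (2 * (j : ℝ)) ^ 2 = 4 * j ^ 2 by ring, mul_pow, ← pow_mul, pow_succ, one_div, inv_pow]
  have hj0 : (0 : ℝ) < j := by exact_mod_cast hj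
  field_simp
  linear_combination (j : ℝ) ^ (2 * μ + 1) * hsign

lemma integral_Ioi_pow_mul_integral_sin_pow_mul_exp_neg_mul_abs {k μ : ℕ} (hμk : μ < k) :
    ∫ t in Set.Ioi 0, t ^ (2 * μ + 1) * ∫ u, sin u ^ (2 * k) * exp (-(t * |u|)) =
      π * (-(1 / 4)) ^ (k - (μ + 1)) *
        ∑ j ∈ Icc 1 k, (-1) ^ (k - j) * (2 * k).choose (k - j) * (j : ℝ) ^ (2 * μ + 1) := by
  have hlaplace (t : ℝ) (ht : t ∈ Set.Ioi 0) :
      t ^ (2 * μ + 1) * ∫ u, sin u ^ (2 * k) * exp (-(t * |u|)) =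
        2 * (2 * k)! * (t ^ (2 * μ) / ∏ j ∈ Icc 1 k, (t ^ 2 + (2 * (j : ℝ)) ^ 2)) := by
    rw [pow_succ, mul_assoc, mul_integral_sin_pow_mul_exp_neg_mul_abs k ht]
    ring
  have hnodes : Set.InjOn (fun j : ℕ => 2 * (j : ℝ)) (Icc 1 k) := fun i _ j _ h => by
    simpa using h
  rw [setIntegral_congr_fun measurableSet_Ioi hlaplace, integral_const_mul,
    integral_Ioi_pow_div_prod_sq_add_sq (a := fun j : ℕ => 2 * (j : ℝ))
      (fun j hj => by have := (mem_Icc.1 hj).1; positivity) hnodes (by simpa),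
    mul_sum, mul_sum]
  exact sum_congr rfl fun j hj =>
    two_mul_factorial_mul_nodalWeight_eq (mem_Icc.1 hj).1 (mem_Icc.1 hj).2 hμk

lemma sum_range_neg_one_pow_mul_choose_mul_sub_pow (k n : ℕ) :
    ∑ i ∈ range k, (-1 : ℝ) ^ i * (2 * k).choose i * ((k : ℝ) - i) ^ n =
      ∑ j ∈ Icc 1 k, (-1 : ℝ) ^ (k - j) * (2 * k).choose (k - j) * (j : ℝ) ^ n := by
  refine sum_nbij' (k - ·) (k - ·) ?_ ?_ ?_ ?_ ?_ <;> intro i hi <;>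
    simp only [mem_range, mem_Icc] at hi ⊢
  any_goals omega
  rw [Nat.sub_sub_self hi.le, Nat.cast_sub hi.le]

theorem dirichlet_type_integral_general (k m : ℕ) (hm : 1 ≤ m) (hmk : m ≤ k) :
    ∫ u : ℝ, Real.sin u ^ (2 * k) / u ^ (2 * m) =
      π * (-(1 / 4 : ℝ)) ^ (k - m) / (Nat.factorial (2 * m - 1)) *
        ∑ i ∈ Finset.range k,
          (-1 : ℝ) ^ i * (Nat.choose (2 * k) i) * ((k : ℝ) - i) ^ (2 * m - 1) := by
  obtain ⟨μ, rfl⟩ : ∃ μ, m = μ + 1 := ⟨m - 1, by omega⟩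
  have hpow (u : ℝ) : u ^ (2 * (μ + 1)) = |u| ^ (2 * μ + 1 + 1) := by
    rw [← (even_two_mul _).pow_abs]; ring
  have hint : Integrable fun u : ℝ => sin u ^ (2 * k) / |u| ^ (2 * μ + 1 + 1) := by
    simpa only [hpow] using integrable_sin_pow_div_pow (n := 2 * k) (p := 2 * (μ + 1))
      (by omega) (by omega)
  simp_rw [hpow]
  rw [integral_div_abs_pow_eq_integral_Ioi_laplace _ hint,
    integral_Ioi_pow_mul_integral_sin_pow_mul_exp_neg_mul_abs hmk,
    show 2 * (μ + 1) - 1 = 2 * μ + 1 by omega, sum_range_neg_one_pow_mul_choose_mul_sub_pow]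
  ring

theorem dirichlet_type_integral (k m : ℕ) (hk : 1 ≤ k) (hm : 1 ≤ m) (hmk : m ≤ k) :
    ∫ u : ℝ, Real.sin u ^ (2 * k) / u ^ (2 * m) =
      π * (-(1 / 4 : ℝ)) ^ (k - m) / (Nat.factorial (2 * m - 1)) *
        ∑ i ∈ Finset.range k,
          (-1 : ℝ) ^ i * (Nat.choose (2 * k) i) * ((k : ℝ) - i) ^ (2 * m - 1) :=
  dirichlet_type_integral_general k m hm hmk
end

section
/- For positive integers n and k and any real t with t ≠ πn/2 and t ≠ -πn/2, the following partial-fraction identity holds: 1/((t - πn/2)^{2k} (t + πn/2)^{2k}) = (πn)^{-2k} · Σ_{j=0}^{2k-1} (πn)^{-j} · C(j+2k-1, 2k-1) · [(t + πn/2)^{j-2k} + (-1)^j (t - πn/2)^{j-2k}]. -/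
/-!
Write `T_m(s) = ∑_{j ≤ m} C(m + j, m) s^j` for the degree-`m` truncation of
`(1 - s)^{-(m+1)}`. Then `(1 - s)^{m+1} T_m(s) + s^{m+1} T_m(1 - s) = 1`, by induction on `m`:
`(1 - s) T_{m+1}(s)` is `T_m(s)` plus two boundary terms, and these cancel in the symmetric sum
because `C(2m + 2, m + 1) = 2 C(2m + 1, m)`. Substituting `s = -x / (y - x)`, so that
`1 - s = y / (y - x)`, and dividing by `x^{m+1} y^{m+1}` gives the partial fraction expansion
of `1 / (x^{m+1} y^{m+1})`; the theorem is the case `x, y = t ∓ πn/2`, `m + 1 = 2k`.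
-/

open Real Finset

section CommRing

variable {R : Type*} [CommRing R]

def invOneSubPowTrunc (m : ℕ) (s : R) : R :=
  ∑ j ∈ range (m + 1), ((m + j).choose m : R) * s ^ j

theorem one_sub_mul_invOneSubPowTrunc_succ (m : ℕ) (s : R) :
    (1 - s) * invOneSubPowTrunc (m + 1) s =
      invOneSubPowTrunc m s + ((2 * m + 1).choose m : R) * s ^ (m + 1)
        - ((2 * m + 2).choose (m + 1) : R) * s ^ (m + 2) := by
  set c : ℕ → R := fun j ↦ ((m + 1 + j).choose (m + 1) : R)
  set d : ℕ → R := fun j ↦ ((m + j).choose m : R)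
  have pascal (j : ℕ) : c (j + 1) = d (j + 1) + c j := by
    simp only [c, d, ← Nat.cast_add]
    congr 1
    rw [show m + 1 + (j + 1) = m + j + 1 + 1 by omega, Nat.choose_succ_succ',
      show m + (j + 1) = m + j + 1 by omega, show m + 1 + j = m + j + 1 by omega]
  have hc0 : c 0 = d 0 := by simp [c, d]
  have hc_top : c (m + 1) = ((2 * m + 2).choose (m + 1) : R) := by
    simp only [c, show m + 1 + (m + 1) = 2 * m + 2 by omega]
  have hd_top : d (m + 1) = ((2 * m + 1).choose m : R) := by
    simp only [d, show m + (m + 1) = 2 * m + 1 by omega]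
  have hshift : ∑ j ∈ range (m + 2), c j * s ^ j
      = ∑ j ∈ range (m + 2), d j * s ^ j + s * ∑ j ∈ range (m + 1), c j * s ^ j := by
    have hsucc : ∑ j ∈ range (m + 1), c (j + 1) * s ^ (j + 1)
        = ∑ j ∈ range (m + 1), d (j + 1) * s ^ (j + 1) + s * ∑ j ∈ range (m + 1), c j * s ^ j := by
      rw [mul_sum, ← sum_add_distrib]
      exact sum_congr rfl fun j _ ↦ by rw [pascal]; ring
    rw [sum_range_succ' _ (m + 1), sum_range_succ' (fun j ↦ d j * s ^ j) (m + 1), hsucc, hc0]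
    ring
  have htop : s * ∑ j ∈ range (m + 2), c j * s ^ j
      = s * ∑ j ∈ range (m + 1), c j * s ^ j + c (m + 1) * s ^ (m + 2) := by
    rw [sum_range_succ]; ring
  calc (1 - s) * invOneSubPowTrunc (m + 1) s
      = ∑ j ∈ range (m + 2), c j * s ^ j - s * ∑ j ∈ range (m + 2), c j * s ^ j := by
        simp only [invOneSubPowTrunc, c]; ring
    _ = ∑ j ∈ range (m + 2), d j * s ^ j - c (m + 1) * s ^ (m + 2) := by
        rw [htop, hshift]; ring
    _ = _ := by rw [sum_range_succ, hc_top, hd_top]; rfl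

theorem one_sub_pow_mul_invOneSubPowTrunc_add (m : ℕ) (s : R) :
    (1 - s) ^ (m + 1) * invOneSubPowTrunc m s + s ^ (m + 1) * invOneSubPowTrunc m (1 - s) = 1 := by
  induction m with
  | zero => simp [invOneSubPowTrunc]
  | succ m ih =>
    have hs := one_sub_mul_invOneSubPowTrunc_succ m s
    have hs' := one_sub_mul_invOneSubPowTrunc_succ m (1 - s)
    rw [sub_sub_cancel] at hs'
    have hcentral : ((2 * m + 2).choose (m + 1) : R) = 2 * ((2 * m + 1).choose m : R) := by
      rw [Nat.choose_succ_succ', ← Nat.choose_symm_half]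
      push_cast; ring
    rw [hcentral] at hs hs'
    linear_combination (1 - s) ^ (m + 1) * hs + s ^ (m + 1) * hs' + ih

end CommRing

theorem one_div_pow_mul_pow_eq_sum {K : Type*} [Field K] {x y : K} (hx : x ≠ 0) (hy : y ≠ 0)
    (hxy : x ≠ y) (m : ℕ) :
    1 / (x ^ (m + 1) * y ^ (m + 1)) =
      ((y - x) ^ (m + 1))⁻¹ * ∑ j ∈ range (m + 1), ((y - x) ^ j)⁻¹ * ((j + m).choose m : K) *
        ((-1) ^ (m + 1) * (y ^ (m + 1 - j))⁻¹ + (-1) ^ j * (x ^ (m + 1 - j))⁻¹) := by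
  have hc : y - x ≠ 0 := sub_ne_zero.mpr hxy.symm
  have hsum : ∑ j ∈ range (m + 1), ((y - x) ^ j)⁻¹ * ((j + m).choose m : K) *
        ((-1) ^ (m + 1) * (y ^ (m + 1 - j))⁻¹ + (-1) ^ j * (x ^ (m + 1 - j))⁻¹)
      = (-1) ^ (m + 1) * invOneSubPowTrunc m (y / (y - x)) / y ^ (m + 1)
        + invOneSubPowTrunc m (-x / (y - x)) / x ^ (m + 1) := by
    simp only [invOneSubPowTrunc, sum_div, mul_sum, ← sum_add_distrib]
    refine sum_congr rfl fun j hj ↦ ?_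
    have hj : j ≤ m + 1 := (mem_range.mp hj).le
    rw [pow_sub₀ _ hy hj, pow_sub₀ _ hx hj, add_comm j m]
    simp only [neg_div, neg_pow (x / (y - x)), div_pow]
    field_simp
  have key := one_sub_pow_mul_invOneSubPowTrunc_add m (-x / (y - x))
  rw [show 1 - -x / (y - x) = y / (y - x) by field_simp; ring] at key
  rw [neg_div, neg_pow, div_pow, div_pow] at key
  rw [hsum, neg_div]
  field_simp at key ⊢
  linear_combination -key

theorem partial_fraction_pi_n (n k : ℕ) (hn : 1 ≤ n) (hk : 1 ≤ k) (t : ℝ)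
    (h1 : t ≠ π * n / 2) (h2 : t ≠ -(π * n / 2)) :
    1 / ((t - π * n / 2) ^ (2 * k) * (t + π * n / 2) ^ (2 * k)) =
      ((π * n) ^ (2 * k))⁻¹ *
        ∑ j ∈ Finset.range (2 * k),
          ((π * n) ^ j)⁻¹ * (Nat.choose (j + 2 * k - 1) (2 * k - 1)) *
            (((t + π * n / 2) ^ (2 * k - j))⁻¹ +
              (-1 : ℝ) ^ j * ((t - π * n / 2) ^ (2 * k - j))⁻¹) := by
  have hpin : π * n ≠ 0 := by positivity
  have hx : t - π * n / 2 ≠ 0 := sub_ne_zero.mpr h1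
  have hy : t + π * n / 2 ≠ 0 := by rwa [← sub_neg_eq_add, sub_ne_zero]
  have hxy : t - π * n / 2 ≠ t + π * n / 2 := by
    intro h; apply hpin; linarith
  have h2k : 2 * k - 1 + 1 = 2 * k := by omega
  have h := one_div_pow_mul_pow_eq_sum hx hy hxy (2 * k - 1)
  have hchoose (j : ℕ) : j + (2 * k - 1) = j + 2 * k - 1 := by omega
  rw [h2k, show t + π * n / 2 - (t - π * n / 2) = π * n by ring,
    Even.neg_one_pow ⟨k, two_mul k⟩] at h
  simpa only [hchoose, one_mul] using h
end

section
/- For positive real b and any real t with t ≠ b and t ≠ -b, and any positive integer k: 1/((t - b)^{2k} (t + b)^{2k}) = (2b)^{-2k} · Σ_{j=0}^{2k-1} (2b)^{-j} · C(j+2k-1, 2k-1) · [(t + b)^{j-2k} + (-1)^j (t - b)^{j-2k}]. -/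
/-!
Put `u = b - t` and `y = t + b`, so that `u + y = 2b`; since `2k` is even, `(t - b)^(2k) = u^(2k)`
and the signs `(-1)^j` cancel. The claim becomes the partial fraction decomposition of
`1 / (u^(m+1) y^(n+1))` for `m = n = 2k - 1`, which after clearing denominators is the polynomial
identity
  `(u + y)^(m+n+1) = y^(n+1) ∑_{j ≤ m} C(n+j, j) u^j (u+y)^(m-j)`
                    `+ u^(m+1) ∑_{j ≤ n} C(m+j, j) y^j (u+y)^(n-j)`.
Pascal's rule writes the right side for `(m+1, n+1)` as `u` times the one for `(m, n+1)` plus `y`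
times the one for `(m+1, n)`, so a double induction reduces it to the geometric sums at `m = 0`
or `n = 0`.
-/

open Finset

/-- The homogenized truncation to degree `< n` of `(1 - x)^(-(p+1)) = ∑_j C(p+j, j) x^j`. -/
def negBinomSum {R : Type*} [CommRing R] (p n : ℕ) (x s : R) : R :=
  ∑ j ∈ range n, (p + j).choose j * x ^ j * s ^ (n - 1 - j)

section CommRing

variable {R : Type*} [CommRing R]

theorem negBinomSum_one (p : ℕ) (x s : R) : negBinomSum p 1 x s = 1 := by
  simp [negBinomSum]

theorem negBinomSum_succ_succ (p n : ℕ) (x s : R) :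
    negBinomSum (p + 1) (n + 1) x s = negBinomSum p (n + 1) x s + x * negBinomSum (p + 1) n x s := by
  have pascal : ∀ j ∈ range n,
      ((p + 1 + (j + 1)).choose (j + 1) : R) * x ^ (j + 1) * s ^ (n + 1 - 1 - (j + 1)) =
        (p + (j + 1)).choose (j + 1) * x ^ (j + 1) * s ^ (n + 1 - 1 - (j + 1)) +
          x * ((p + 1 + j).choose j * x ^ j * s ^ (n - 1 - j)) := fun j _ => by
    rw [show p + 1 + (j + 1) = p + j + 1 + 1 by omega, Nat.choose_succ_succ',
      show n + 1 - 1 - (j + 1) = n - 1 - j by omega, show p + 1 + j = p + j + 1 by omega]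
    push_cast
    ring_nf
  rw [negBinomSum, negBinomSum, negBinomSum, sum_range_succ', sum_range_succ', mul_sum,
    sum_congr rfl pascal, sum_add_distrib]
  simp only [Nat.choose_zero_right]
  ring

theorem add_pow_succ_eq_add_mul_negBinomSum_zero (u y : R) (m : ℕ) :
    (u + y) ^ (m + 1) = u ^ (m + 1) + y * negBinomSum 0 (m + 1) u (u + y) := by
  have h := geom_sum₂_mul u (u + y) (m + 1)
  simp only [negBinomSum, zero_add, Nat.choose_self, Nat.cast_one, one_mul]
  linear_combination h

theorem add_pow_eq_negBinomSum (u y : R) :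
    ∀ m n : ℕ, (u + y) ^ (m + n + 1) =
      y ^ (n + 1) * negBinomSum n (m + 1) u (u + y) + u ^ (m + 1) * negBinomSum m (n + 1) y (u + y)
  | 0, n => by
    rw [negBinomSum_one, add_comm u y, add_pow_succ_eq_add_mul_negBinomSum_zero y u]
    ring_nf
  | m + 1, 0 => by
    rw [negBinomSum_one, add_pow_succ_eq_add_mul_negBinomSum_zero u y]
    ring_nf
  | m + 1, n + 1 => by
    have hu := add_pow_eq_negBinomSum u y m (n + 1)
    have hy := add_pow_eq_negBinomSum u y (m + 1) n
    rw [negBinomSum_succ_succ n (m + 1), negBinomSum_succ_succ m (n + 1)]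
    linear_combination u * hu + y * hy

end CommRing

section Field

variable {K : Type*} [Field K]

theorem negBinomSum_div {x s : K} (hx : x ≠ 0) (hs : s ≠ 0) (p m : ℕ) :
    negBinomSum p (m + 1) x s / (s ^ (m + p + 1) * x ^ (m + 1)) =
      ∑ j ∈ range (m + 1), (p + j).choose j * (s ^ (p + 1 + j))⁻¹ * (x ^ (m + 1 - j))⁻¹ := by
  rw [negBinomSum, sum_div]
  refine sum_congr rfl fun j hj => ?_
  obtain ⟨i, rfl⟩ := Nat.exists_eq_add_of_le (Nat.lt_succ_iff.mp (mem_range.mp hj))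
  rw [show j + i + 1 - 1 - j = i by omega, show j + i + 1 - j = i + 1 by omega]
  field_simp
  ring

theorem inv_pow_mul_pow_eq_sum_add_sum {u y : K} (hu : u ≠ 0) (hy : y ≠ 0) (hs : u + y ≠ 0)
    (m n : ℕ) :
    (u ^ (m + 1) * y ^ (n + 1))⁻¹ =
      ∑ j ∈ range (m + 1), (n + j).choose j * ((u + y) ^ (n + 1 + j))⁻¹ * (u ^ (m + 1 - j))⁻¹ +
        ∑ j ∈ range (n + 1), (m + j).choose j * ((u + y) ^ (m + 1 + j))⁻¹ * (y ^ (n + 1 - j))⁻¹ := by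
  have key := add_pow_eq_negBinomSum u y m n
  rw [← negBinomSum_div hu hs, ← negBinomSum_div hy hs, add_comm n m]
  field_simp
  exact key

theorem neg_one_pow_mul_inv_neg_pow_sub {x : K} {n j : ℕ} (hn : Even n) (hj : j ≤ n) :
    (-1) ^ j * ((-x) ^ (n - j))⁻¹ = (x ^ (n - j))⁻¹ := by
  obtain ⟨i, rfl⟩ := Nat.exists_eq_add_of_le hj
  rw [Nat.add_sub_cancel_left, neg_pow x, mul_inv, ← inv_pow, inv_neg_one, ← mul_assoc, ← pow_add,
    hn.neg_one_pow, one_mul]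

end Field

theorem partial_fraction_general (b : ℝ) (hb : 0 < b) (k : ℕ) (hk : 1 ≤ k) (t : ℝ)
    (h1 : t ≠ b) (h2 : t ≠ -b) :
    1 / ((t - b) ^ (2 * k) * (t + b) ^ (2 * k)) =
      ((2 * b) ^ (2 * k))⁻¹ *
        ∑ j ∈ Finset.range (2 * k),
          ((2 * b) ^ j)⁻¹ * (Nat.choose (j + 2 * k - 1) (2 * k - 1)) *
            (((t + b) ^ (2 * k - j))⁻¹ + (-1 : ℝ) ^ j * ((t - b) ^ (2 * k - j))⁻¹) := by
  obtain ⟨N, hN⟩ : ∃ N, 2 * k = N + 1 := ⟨2 * k - 1, by omega⟩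
  have heven : Even (N + 1) := hN ▸ even_two_mul k
  have hu : b - t ≠ 0 := sub_ne_zero.mpr h1.symm
  have hy : t + b ≠ 0 := fun h => h2 (eq_neg_of_add_eq_zero_left h)
  have hs : b - t + (t + b) = 2 * b := by ring
  rw [hN, ← neg_sub b t, heven.neg_pow, one_div,
    inv_pow_mul_pow_eq_sum_add_sum hu hy (hs ▸ by positivity), hs, ← sum_add_distrib, mul_sum]
  refine sum_congr rfl fun j hj => ?_
  rw [neg_one_pow_mul_inv_neg_pow_sub heven (mem_range.mp hj).le, Nat.add_sub_cancel,
    show j + (N + 1) - 1 = j + N by omega, ← Nat.choose_symm_add, add_comm j N]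
  ring
end

section
/- For positive integers n and k, the integral I_{n,k} := ∫_{-∞}^{∞} [sin²(t - πn/2) / (t² - π²n²/4)²]^k dt satisfies I_{n,k} = (πn)^{-2k} · Σ_{j=0}^{k-1} 2 (πn)^{-2j} · C(2j+2k-1, 2k-1) · ∫_{-∞}^{∞} sin^{2k}(u) / u^{2(k-j)} du. -/
open Real MeasureTheory Finset Filter Topology

/-!
The shift `t = x + πn/2` turns the integrand into `sin x ^ 2k / (x ^ 2k (x + πn) ^ 2k)`.
Dividing the homogeneous identity
`(u + y) ^ (p + q + 1) = y ^ (q + 1) Σ_{s ≤ p} C(q+s, s) (u+y) ^ (p-s) u ^ s + (u ↔ y, p ↔ q)`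
by `(u + y) ^ (p + q + 1) u ^ (p + 1) y ^ (q + 1)` gives the partial fraction expansion of
`1 / (x ^ 2k (x + b) ^ 2k)`: the terms `(-1) ^ s / x ^ (2k - s)` and `1 / (x + b) ^ (2k - s)`, both
with coefficient `C(2k - 1 + s, s) / b ^ (2k + s)`. Since `sin ^ 2k` is `π`-periodic, the
`(x + πn)`-term is the translate of the `x`-term. For even `s` the pair therefore integrates to
twice the Dirichlet-type integral, and for odd `s` to zero, because `∫ (f (x + b) - f x) = 0`
for every locally integrable `f` tending to `0` at infinity.
-/

section NegBinomial

variable {R : Type*} [CommSemiring R]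

/-- `b ^ p` times the degree-`p` Taylor polynomial of `(1 - z / b) ^ (-(q + 1))`. -/
def negBinomPartialSum (b z : R) (p q : ℕ) : R :=
  ∑ s ∈ range (p + 1), ((q + s).choose s : R) * b ^ (p - s) * z ^ s

@[simp]
lemma negBinomPartialSum_zero_left (b z : R) (q : ℕ) : negBinomPartialSum b z 0 q = 1 := by
  simp [negBinomPartialSum]

lemma negBinomPartialSum_succ_succ (b z : R) (p q : ℕ) :
    negBinomPartialSum b z (p + 1) (q + 1) =
      z * negBinomPartialSum b z p (q + 1) + negBinomPartialSum b z (p + 1) q := by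
  simp only [negBinomPartialSum]
  rw [sum_range_succ' _ (p + 1), sum_range_succ' _ (p + 1), mul_sum, ← add_assoc,
    ← sum_add_distrib]
  congr 1
  · refine sum_congr rfl fun s _ => ?_
    rw [show q + 1 + (s + 1) = (q + 1 + s) + 1 by ring, Nat.choose_succ_succ',
      show q + (s + 1) = q + 1 + s by ring, show p + 1 - (s + 1) = p - s by omega]
    push_cast
    ring
  · simp

lemma add_pow_succ_eq_pow_add_mul_negBinomPartialSum (u y : R) (q : ℕ) :
    (u + y) ^ (q + 1) = y ^ (q + 1) + u * negBinomPartialSum (u + y) y q 0 := by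
  rw [← geom_sum₂_mul_add u y (q + 1), add_comm, mul_comm, negBinomPartialSum,
    ← sum_range_reflect]
  congr 2
  refine sum_congr rfl fun s hs => ?_
  rw [mem_range] at hs
  rw [add_tsub_cancel_right, zero_add, Nat.choose_self, Nat.cast_one, one_mul,
    Nat.sub_sub_self (by omega)]

theorem add_pow_eq_negBinomPartialSum (u y : R) (p q : ℕ) :
    (u + y) ^ (p + q + 1) =
      y ^ (q + 1) * negBinomPartialSum (u + y) u p q +
        u ^ (p + 1) * negBinomPartialSum (u + y) y q p := by
  induction p generalizing q with
  | zero => simpa [add_comm] using add_pow_succ_eq_pow_add_mul_negBinomPartialSum u y q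
  | succ p ihp =>
    induction q with
    | zero => simpa [add_comm] using add_pow_succ_eq_pow_add_mul_negBinomPartialSum y u (p + 1)
    | succ q ihq =>
      rw [negBinomPartialSum_succ_succ, negBinomPartialSum_succ_succ]
      calc (u + y) ^ (p + 1 + (q + 1) + 1)
          = u * (u + y) ^ (p + (q + 1) + 1) + y * (u + y) ^ (p + 1 + q + 1) := by ring
        _ = _ := by rw [ihp (q + 1), ihq]; ring

end NegBinomial

section PartialFractions

variable {K : Type*} [Field K]

lemma negBinomPartialSum_div {b z : K} (hb : b ≠ 0) (hz : z ≠ 0) (p q : ℕ) :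
    negBinomPartialSum b z p q / (b ^ (p + q + 1) * z ^ (p + 1)) =
      ∑ s ∈ range (p + 1), ((q + s).choose s : K) / (b ^ (q + 1 + s) * z ^ (p + 1 - s)) := by
  rw [negBinomPartialSum, sum_div]
  refine sum_congr rfl fun s hs => ?_
  rw [mem_range] at hs
  rw [show b ^ (p + q + 1) = b ^ (p - s) * b ^ (q + 1 + s) by rw [← pow_add]; congr 1; omega,
    show z ^ (p + 1) = z ^ s * z ^ (p + 1 - s) by rw [← pow_add]; congr 1; omega]
  field_simp

theorem inv_pow_mul_pow_eq_sum {u y : K} (hu : u ≠ 0) (hy : y ≠ 0) (huy : u + y ≠ 0)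
    (p q : ℕ) :
    (u ^ (p + 1) * y ^ (q + 1))⁻¹ =
      ∑ s ∈ range (p + 1), ((q + s).choose s : K) / ((u + y) ^ (q + 1 + s) * u ^ (p + 1 - s)) +
        ∑ s ∈ range (q + 1),
          ((p + s).choose s : K) / ((u + y) ^ (p + 1 + s) * y ^ (q + 1 - s)) := by
  rw [← negBinomPartialSum_div huy hu, ← negBinomPartialSum_div huy hy, add_comm q p]
  field_simp
  linear_combination add_pow_eq_negBinomPartialSum u y p q

theorem inv_pow_mul_add_pow_eq_sum {x b : K} (hx : x ≠ 0) (hb : b ≠ 0) (hxb : x + b ≠ 0)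
    {m : ℕ} (hm : m ≠ 0) :
    (x ^ m * (x + b) ^ m)⁻¹ =
      ∑ s ∈ range m, ((m - 1 + s).choose s : K) / b ^ (m + s) *
        ((-1) ^ s / x ^ (m - s) + (-1) ^ m / (x + b) ^ (m - s)) := by
  obtain ⟨p, rfl⟩ := Nat.exists_eq_add_one_of_ne_zero hm
  have key := inv_pow_mul_pow_eq_sum (neg_ne_zero.2 hx) hxb (by simpa using hb) p p
  rw [neg_add_cancel_left, neg_pow, mul_assoc, mul_inv, ← sum_add_distrib,
    inv_mul_eq_iff_eq_mul₀ (by simp), mul_sum] at key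
  rw [key, add_tsub_cancel_right]
  refine sum_congr rfl fun s hs => ?_
  rw [mem_range] at hs
  rw [neg_pow x, show ((-1 : K) ^ (p + 1)) = (-1) ^ (p + 1 - s) * (-1) ^ s by
    rw [← pow_add, Nat.sub_add_cancel hs.le]]
  field_simp

end PartialFractions

section ShiftDifference

variable {E : Type*} [NormedAddCommGroup E] [NormedSpace ℝ E] {f : ℝ → E}

lemma tendsto_intervalIntegral_add_cocompact (hf : Tendsto f (cocompact ℝ) (𝓝 0)) (b : ℝ) :
    Tendsto (fun R => ∫ x in R..R + b, f x) (cocompact ℝ) (𝓝 0) := by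
  rw [Metric.tendsto_nhds]
  intro ε hε
  have hδ : 0 < ε / (|b| + 1) := by positivity
  obtain ⟨r, hr⟩ : ∃ r, ∀ x : ℝ, r ≤ ‖x‖ → dist (f x) 0 < ε / (|b| + 1) := by
    have := Metric.tendsto_nhds.1 hf _ hδ
    rw [← Metric.cobounded_eq_cocompact, ← comap_norm_atTop, eventually_comap,
      eventually_atTop] at this
    obtain ⟨r, hr⟩ := this
    exact ⟨r, fun x hx => hr _ hx x rfl⟩
  filter_upwards [tendsto_norm_cocompact_atTop.eventually_ge_atTop (r + |b|)] with R hR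
  rw [dist_zero_right]
  calc ‖∫ x in R..R + b, f x‖ ≤ ε / (|b| + 1) * |R + b - R| := by
        refine intervalIntegral.norm_integral_le_of_norm_le_const fun x hx => ?_
        rw [← dist_zero_right]
        refine (hr x ?_).le
        have := Set.abs_sub_left_of_mem_uIcc (Set.uIoc_subset_uIcc hx)
        rw [Real.norm_eq_abs] at hR ⊢
        rw [add_sub_cancel_left] at this
        linarith [abs_sub_abs_le_abs_sub R x, abs_sub_comm x R]
    _ < ε := by
        rw [add_sub_cancel_left, div_mul_eq_mul_div, div_lt_iff₀ (by positivity)]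
        nlinarith [abs_nonneg b]

/-- On `[-R, R]` the integral of `f (x + b) - f x` telescopes to
`∫ x in R..R + b, f x - ∫ x in -R..-R + b, f x`, and both terms vanish as `R → ∞`. -/
theorem integral_comp_add_right_sub_eq_zero (hf : LocallyIntegrable f)
    (hlim : Tendsto f (cocompact ℝ) (𝓝 0)) (b : ℝ)
    (hint : Integrable fun x => f (x + b) - f x) :
    ∫ x, (f (x + b) - f x) = 0 := by
  have hii (a c : ℝ) : IntervalIntegrable f volume a c :=
    (hf.integrableOn_isCompact isCompact_uIcc).intervalIntegrable
  have hsym (R : ℝ) : ∫ x in -R..R, (f (x + b) - f x) =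
      (∫ x in R..R + b, f x) - ∫ x in -R..-R + b, f x := by
    have hshift : IntervalIntegrable (fun x => f (x + b)) volume (-R) R := by
      simpa using (hii (-R + b) (R + b)).comp_add_right b
    rw [intervalIntegral.integral_sub hshift (hii _ _),
      intervalIntegral.integral_comp_add_right, ← neg_sub,
      intervalIntegral.integral_interval_sub_interval_comm (hii _ _) (hii _ _) (hii _ _), neg_sub]
  have hlim' := tendsto_intervalIntegral_add_cocompact hlim b
  have hsym_lim : Tendsto (fun R => ∫ x in -R..R, (f (x + b) - f x)) atTop (𝓝 0) := by
    simpa only [hsym, sub_zero, Function.comp_apply, id] using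
      (hlim'.comp (tendsto_id.mono_right atTop_le_cocompact)).sub
        (hlim'.comp (tendsto_neg_atTop_atBot.mono_right atBot_le_cocompact))
  exact tendsto_nhds_unique
    (intervalIntegral_tendsto_integral hint tendsto_neg_atTop_atBot tendsto_id) hsym_lim

end ShiftDifference

section SinPowDiv

noncomputable def sinPowDiv (m j : ℕ) (x : ℝ) : ℝ := sin x ^ m / x ^ j

variable {m j : ℕ}

lemma abs_sinPowDiv_le_one (hjm : j ≤ m) (x : ℝ) : |sinPowDiv m j x| ≤ 1 := by
  rw [sinPowDiv, abs_div, abs_pow, abs_pow]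
  refine div_le_one_of_le₀ ?_ (by positivity)
  rcases le_total |x| 1 with hx | hx
  · exact (pow_le_pow_left₀ (abs_nonneg _) abs_sin_le_abs m).trans
      (pow_le_pow_of_le_one (abs_nonneg _) hx hjm)
  · exact (pow_le_one₀ (abs_nonneg _) (abs_sin_le_one x)).trans (one_le_pow₀ hx)

lemma abs_sinPowDiv_le_inv (m j : ℕ) (x : ℝ) : |sinPowDiv m j x| ≤ (|x| ^ j)⁻¹ := by
  rw [sinPowDiv, abs_div, abs_pow, abs_pow, ← one_div]
  exact div_le_div_of_nonneg_right (pow_le_one₀ (abs_nonneg _) (abs_sin_le_one x)) (by positivity)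

lemma abs_sinPowDiv_le_two_mul_inv (hj : 2 ≤ j) (hjm : j ≤ m) (x : ℝ) :
    |sinPowDiv m j x| ≤ 2 * (1 + x ^ 2)⁻¹ := by
  rcases le_total |x| 1 with hx | hx
  · refine (abs_sinPowDiv_le_one hjm x).trans ?_
    rw [← div_eq_mul_inv, le_div_iff₀ (by positivity)]
    nlinarith [sq_abs x, abs_nonneg x]
  · refine (abs_sinPowDiv_le_inv m j x).trans ?_
    have hx2 : x ^ 2 ≤ |x| ^ j := sq_abs x ▸ pow_le_pow_right₀ hx hj
    rw [← div_eq_mul_inv, inv_le_iff_one_le_mul₀ (by positivity), div_mul_eq_mul_div,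
      le_div_iff₀ (by positivity)]
    nlinarith [sq_abs x]

lemma measurable_sinPowDiv (m j : ℕ) : Measurable (sinPowDiv m j) := by
  unfold sinPowDiv
  fun_prop

lemma integrable_sinPowDiv (hj : 2 ≤ j) (hjm : j ≤ m) : Integrable (sinPowDiv m j) :=
  (integrable_inv_one_add_sq.const_mul 2).mono' (measurable_sinPowDiv m j).aestronglyMeasurable
    (ae_of_all _ (abs_sinPowDiv_le_two_mul_inv hj hjm))

lemma locallyIntegrable_sinPowDiv (hjm : j ≤ m) : LocallyIntegrable (sinPowDiv m j) :=
  (locallyIntegrable_const (1 : ℝ)).mono (measurable_sinPowDiv m j).aestronglyMeasurable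
    (ae_of_all _ fun x => by
      rw [norm_one, Real.norm_eq_abs]; exact abs_sinPowDiv_le_one hjm x)

lemma tendsto_sinPowDiv_cocompact (m : ℕ) (hj : j ≠ 0) :
    Tendsto (sinPowDiv m j) (cocompact ℝ) (𝓝 0) := by
  have hinv : Tendsto (fun x : ℝ => (|x| ^ j)⁻¹) (cocompact ℝ) (𝓝 0) :=
    ((tendsto_pow_atTop hj).comp tendsto_norm_cocompact_atTop).inv_tendsto_atTop
  exact squeeze_zero_norm (abs_sinPowDiv_le_inv m j) hinv

end SinPowDiv

lemma sin_add_pi_mul_natCast_pow_two_mul (k n : ℕ) (x : ℝ) :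
    sin (x + π * n) ^ (2 * k) = sin x ^ (2 * k) := by
  rw [mul_comm π, sin_add_nat_mul_pi, mul_pow, ← pow_mul,
    ((even_two_mul k).mul_left n).neg_one_pow, one_mul]

lemma sin_eq_zero_of_mul_add_pi_mul_eq_zero {x : ℝ} (n : ℕ) (h : x * (x + π * n) = 0) :
    sin x = 0 := by
  rcases mul_eq_zero.1 h with hx | hx
  · rw [hx, sin_zero]
  · exact sin_eq_zero_iff.2 ⟨-n, by push_cast; linarith⟩

/-- Neither term is integrable on its own; their difference is `-π n` times the product of the
two `L²` functions `sin x ^ k / x` and `sin x ^ k / (x + π n)`. -/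
lemma integrable_sinPowDiv_one_comp_add_sub {k : ℕ} (hk : k ≠ 0) (n : ℕ) :
    Integrable fun x => sinPowDiv (2 * k) 1 (x + π * n) - sinPowDiv (2 * k) 1 x := by
  have hsq : Integrable (sinPowDiv (2 * k) 2) := integrable_sinPowDiv le_rfl (by omega)
  have hL2 (c : ℝ) (hc : ∀ x, sinPowDiv (2 * k) 2 (x + c) = sin x ^ (2 * k) / (x + c) ^ 2) :
      MemLp (fun x : ℝ => sin x ^ k / (x + c)) 2 := by
    refine (memLp_two_iff_integrable_sq (Measurable.aestronglyMeasurable (by fun_prop))).2 ?_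
    refine (hsq.comp_add_right c).congr (ae_of_all _ fun x => ?_)
    beta_reduce
    rw [hc, div_pow, ← pow_mul, mul_comm k]
  have hprod := (hL2 0 fun x => by simp [sinPowDiv]).integrable_mul
    (hL2 (π * n) fun x => by rw [sinPowDiv, sin_add_pi_mul_natCast_pow_two_mul])
  refine (hprod.const_mul (-(π * n))).congr (ae_of_all _ fun x => ?_)
  simp only [Pi.mul_apply, add_zero, sinPowDiv, pow_one, sin_add_pi_mul_natCast_pow_two_mul]
  by_cases h : x * (x + π * n) = 0
  · simp [sin_eq_zero_of_mul_add_pi_mul_eq_zero n h, hk]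
  · have hx : x ≠ 0 := left_ne_zero_of_mul h
    have hxb : x + π * n ≠ 0 := right_ne_zero_of_mul h
    field_simp
    ring

lemma sin_pow_div_pow_mul_add_pow_eq_sum {k n : ℕ} (hk : k ≠ 0) (hn : n ≠ 0) (x : ℝ) :
    sin x ^ (2 * k) / (x ^ (2 * k) * (x + π * n) ^ (2 * k)) =
      ∑ s ∈ range (2 * k), ((2 * k - 1 + s).choose s : ℝ) / (π * n) ^ (2 * k + s) *
        ((-1) ^ s * sinPowDiv (2 * k) (2 * k - s) x +
          sinPowDiv (2 * k) (2 * k - s) (x + π * n)) := by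
  by_cases h : x * (x + π * n) = 0
  · simp [sinPowDiv, sin_eq_zero_of_mul_add_pi_mul_eq_zero n h,
      sin_add_pi_mul_natCast_pow_two_mul, hk]
  · rw [div_eq_mul_inv, inv_pow_mul_add_pow_eq_sum (left_ne_zero_of_mul h) (by positivity)
      (right_ne_zero_of_mul h) (by omega), mul_sum]
    refine sum_congr rfl fun s _ => ?_
    rw [sinPowDiv, sinPowDiv, sin_add_pi_mul_natCast_pow_two_mul, (even_two_mul k).neg_one_pow]
    ring

section ShiftedTerms

variable {k : ℕ} (n : ℕ) {s : ℕ}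

lemma integrable_neg_one_pow_mul_sinPowDiv_add_comp (hk : k ≠ 0) (hs : s < 2 * k) :
    Integrable fun x => (-1) ^ s * sinPowDiv (2 * k) (2 * k - s) x +
      sinPowDiv (2 * k) (2 * k - s) (x + π * n) := by
  rcases (show 2 ≤ 2 * k - s ∨ s = 2 * k - 1 by omega) with h | rfl
  · have hf := integrable_sinPowDiv (m := 2 * k) h (by omega)
    exact (hf.const_mul _).add (hf.comp_add_right (π * n))
  · rw [show 2 * k - (2 * k - 1) = 1 by omega,
      (Nat.odd_iff.2 (by omega) : Odd (2 * k - 1)).neg_one_pow]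
    simpa only [neg_one_mul, neg_add_eq_sub] using integrable_sinPowDiv_one_comp_add_sub hk n

lemma integral_neg_one_pow_mul_sinPowDiv_add_comp_of_odd (hk : k ≠ 0) (hs : s < 2 * k)
    (hodd : Odd s) :
    ∫ x, ((-1) ^ s * sinPowDiv (2 * k) (2 * k - s) x +
      sinPowDiv (2 * k) (2 * k - s) (x + π * n)) = 0 := by
  have hint := integrable_neg_one_pow_mul_sinPowDiv_add_comp n hk hs
  simp only [hodd.neg_one_pow, neg_one_mul, neg_add_eq_sub] at hint ⊢
  exact integral_comp_add_right_sub_eq_zero (locallyIntegrable_sinPowDiv (by omega))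
    (tendsto_sinPowDiv_cocompact _ (by omega)) _ hint

lemma integral_neg_one_pow_mul_sinPowDiv_add_comp_of_even (hs : s + 2 ≤ 2 * k) (heven : Even s) :
    ∫ x, ((-1) ^ s * sinPowDiv (2 * k) (2 * k - s) x +
      sinPowDiv (2 * k) (2 * k - s) (x + π * n)) =
      2 * ∫ x, sinPowDiv (2 * k) (2 * k - s) x := by
  have hf := integrable_sinPowDiv (m := 2 * k) (j := 2 * k - s) (by omega) (by omega)
  simp only [heven.neg_one_pow, one_mul]
  rw [integral_add hf (hf.comp_add_right (π * n)), integral_add_right_eq_self]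
  exact (two_mul _).symm

end ShiftedTerms

lemma sum_range_two_mul {M : Type*} [AddCommMonoid M] (f : ℕ → M) (k : ℕ) :
    ∑ s ∈ range (2 * k), f s = ∑ j ∈ range k, (f (2 * j) + f (2 * j + 1)) := by
  induction k with
  | zero => simp
  | succ k ih =>
    rw [show 2 * (k + 1) = 2 * k + 1 + 1 by ring, sum_range_succ, sum_range_succ, ih,
      sum_range_succ, add_assoc]

theorem Ink_reduction (n k : ℕ) (hn : 1 ≤ n) (hk : 1 ≤ k) :
    ∫ t : ℝ, (Real.sin (t - π * n / 2) ^ 2 / (t ^ 2 - π ^ 2 * n ^ 2 / 4) ^ 2) ^ k =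
      ((π * n) ^ (2 * k))⁻¹ *
        ∑ j ∈ Finset.range k,
          2 * ((π * n) ^ (2 * j))⁻¹ * (Nat.choose (2 * j + 2 * k - 1) (2 * k - 1)) *
            ∫ u : ℝ, Real.sin u ^ (2 * k) / u ^ (2 * (k - j)) := by
  have hk0 : k ≠ 0 := by omega
  have hcentre : ∫ t : ℝ, (sin (t - π * n / 2) ^ 2 / (t ^ 2 - π ^ 2 * n ^ 2 / 4) ^ 2) ^ k =
      ∫ x : ℝ, sin x ^ (2 * k) / (x ^ (2 * k) * (x + π * n) ^ (2 * k)) := by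
    rw [← integral_add_right_eq_self _ (π * n / 2)]
    congr 1 with x
    rw [add_sub_cancel_right, show (x + π * n / 2) ^ 2 - π ^ 2 * n ^ 2 / 4 = x * (x + π * n) by
      ring, div_pow, ← pow_mul, ← pow_mul, mul_pow, mul_comm 2 k]
  rw [hcentre, funext (sin_pow_div_pow_mul_add_pow_eq_sum hk0 (by omega)),
    integral_finsetSum _ fun s hs =>
      (integrable_neg_one_pow_mul_sinPowDiv_add_comp n hk0 (mem_range.1 hs)).const_mul _,
    sum_range_two_mul, mul_sum]
  refine sum_congr rfl fun j hj => ?_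
  rw [mem_range] at hj
  rw [integral_const_mul, integral_const_mul,
    integral_neg_one_pow_mul_sinPowDiv_add_comp_of_odd n hk0 (by omega) (odd_two_mul_add_one j),
    integral_neg_one_pow_mul_sinPowDiv_add_comp_of_even n (by omega) (even_two_mul j), mul_zero,
    add_zero, show 2 * k - 2 * j = 2 * (k - j) by omega,
    show 2 * j + 2 * k - 1 = 2 * k - 1 + 2 * j by omega, Nat.choose_symm_add, pow_add]
  simp only [sinPowDiv]
  ring
end
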